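/- The weak realignment criterion is weaker than the PPT criterion: for every bipartite density matrix ρ on ℂ^d ⊗ ℂ^d, ‖ρ^{T₂}‖_tr ≥ Tr R(ρ), where (·)^{T₂} is partial transposition on the second subsystem. In particular, if ‖ρ^{T₂}‖_tr = 1 (as for any PPT state) then Tr R(ρ) ≤ 1. -/

import Mathlib

open Matrix Kronecker ComplexOrder

/-- Trace norm `‖X‖_tr = Tr √(X Xᴴ)`. -/
noncomputable def traceNorm {m n : Type*} [Fintype m] [Fintype n] [DecidableEq m]
    (X : Matrix m n ℂ) : ℝ :=
  (((Matrix.posSemidef_self_mul_conjTranspose X).1.eigenvectorUnitary.1 *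
    diagonal ((fun x : ℝ => (x : ℂ)) ∘ (Real.sqrt ·) ∘ (Matrix.posSemidef_self_mul_conjTranspose X).1.eigenvalues) *
    (star (Matrix.posSemidef_self_mul_conjTranspose X).1.eigenvectorUnitary : Matrix m m ℂ)).trace).re

/-- A density matrix: positive semidefinite with trace 1. -/
def IsDensityMatrix {n : Type*} [Fintype n] (ρ : Matrix n n ℂ) : Prop :=
  ρ.PosSemidef ∧ ρ.trace = 1

/-- The realignment map: `R(ρ)_{(i,j),(k,l)} = ρ_{(i,k),(j,l)}`. -/
def realign {dA dB : ℕ} (ρ : Matrix (Fin dA × Fin dB) (Fin dA × Fin dB) ℂ) :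
    Matrix (Fin dA × Fin dA) (Fin dB × Fin dB) ℂ :=
  fun p q => ρ (p.1, q.1) (p.2, q.2)

/-- Partial transpose on the second subsystem: `(ρ^{T₂})_{(i,k),(j,l)} = ρ_{(i,l),(j,k)}`. -/
def ptranspose2 {d : ℕ} (ρ : Matrix (Fin d × Fin d) (Fin d × Fin d) ℂ) :
    Matrix (Fin d × Fin d) (Fin d × Fin d) ℂ :=
  fun p q => ρ (p.1, q.2) (q.1, p.2)

/-- The swap (exchange) operator `F_{(i,k),(j,l)} = δ_{il} δ_{kj}`. -/
def swapOp (d : ℕ) : Matrix (Fin d × Fin d) (Fin d × Fin d) ℂ :=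
  fun p q => if p.1 = q.2 ∧ p.2 = q.1 then 1 else 0

/-- The unnormalized maximally entangled projector `(|Ω⟩⟨Ω|)_{(i,k),(j,l)} = δ_{ik} δ_{jl}`. -/
def omegaProj (d : ℕ) : Matrix (Fin d × Fin d) (Fin d × Fin d) ℂ :=
  fun p q => if p.1 = p.2 ∧ q.1 = q.2 then 1 else 0

/-- Separability: `ρ` is a finite convex combination of products of density matrices. -/
def IsSeparableState {dA dB : ℕ} (ρ : Matrix (Fin dA × Fin dB) (Fin dA × Fin dB) ℂ) : Prop :=
  ∃ (m : ℕ) (p : Fin m → ℝ) (σ : Fin m → Matrix (Fin dA) (Fin dA) ℂ)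
    (τ : Fin m → Matrix (Fin dB) (Fin dB) ℂ),
    (∀ k, 0 ≤ p k) ∧ (∑ k, p k = 1) ∧ (∀ k, IsDensityMatrix (σ k)) ∧
    (∀ k, IsDensityMatrix (τ k)) ∧ ρ = ∑ k, (p k : ℂ) • (σ k ⊗ₖ τ k)

/-!
Realignment and partial transposition are related through the swap operator `F`:
`Tr R(ρ) = Tr (F ρ^{T₂})`. Since `F` is a Hermitian involution, `1 - F` and `1 + F` are positive
semidefinite, so writing the Hermitian matrix `X = ρ^{T₂}` as `X⁺ - X⁻` gives
`‖X‖_tr - Tr (F X) = Tr ((1 - F) X⁺) + Tr ((1 + F) X⁻) ≥ 0`.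
-/

open scoped MatrixOrder

namespace Matrix

variable {n : Type*} [Fintype n] [DecidableEq n]

theorem PosSemidef.trace_mul_nonneg {A B : Matrix n n ℂ} (hA : A.PosSemidef)
    (hB : B.PosSemidef) : 0 ≤ (A * B).trace := by
  have hsqrt : (CFC.sqrt A)ᴴ * CFC.sqrt A = A := by
    rw [(CFC.sqrt_nonneg A).posSemidef.isHermitian.eq, CFC.sqrt_mul_sqrt_self A hA.nonneg]
  rw [← hsqrt, Matrix.mul_assoc, trace_mul_comm]
  exact (hB.mul_mul_conjTranspose_same _).trace_nonneg

theorem IsHermitian.posSemidef_one_sub_of_mul_self_eq_one {F : Matrix n n ℂ}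
    (hF : F.IsHermitian) (h : F * F = 1) : (1 - F).PosSemidef := by
  have hsq : (1 - F) * (1 - F) = (2 : ℝ) • (1 - F) := by
    rw [two_smul, sub_mul, mul_sub, mul_sub, h]
    noncomm_ring
  have hhalf : 1 - F = (1 / 2 : ℝ) • ((1 - F)ᴴ * (1 - F)) := by
    rw [(isHermitian_one.sub hF).eq, hsq, smul_smul]
    norm_num
  rw [hhalf]
  exact (posSemidef_conjTranspose_mul_self _).smul (by norm_num)

theorem IsHermitian.posSemidef_one_add_of_mul_self_eq_one {F : Matrix n n ℂ}
    (hF : F.IsHermitian) (h : F * F = 1) : (1 + F).PosSemidef := by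
  simpa using hF.neg.posSemidef_one_sub_of_mul_self_eq_one (by rwa [neg_mul_neg])

theorem trace_mul_le_trace_abs {F X : Matrix n n ℂ} (hX : X.IsHermitian)
    (hF₁ : (1 - F).PosSemidef) (hF₂ : (1 + F).PosSemidef) :
    (F * X).trace ≤ (CFC.abs X).trace := by
  have hdecomp : CFC.abs X - F * X = (1 - F) * X⁺ + (1 + F) * X⁻ :=
    calc CFC.abs X - F * X = (X⁺ + X⁻) - F * (X⁺ - X⁻) := by
          rw [CFC.posPart_add_negPart X hX, CFC.posPart_sub_negPart X hX]
      _ = (1 - F) * X⁺ + (1 + F) * X⁻ := by noncomm_ring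
  rw [← sub_nonneg, ← trace_sub, hdecomp, trace_add]
  exact add_nonneg (hF₁.trace_mul_nonneg (CFC.posPart_nonneg X).posSemidef)
    (hF₂.trace_mul_nonneg (CFC.negPart_nonneg X).posSemidef)

end Matrix

section TraceNorm

variable {n : Type*} [Fintype n] [DecidableEq n]

theorem traceNorm_eq_re_trace_sqrt (X : Matrix n n ℂ) :
    traceNorm X = (CFC.sqrt (X * Xᴴ)).trace.re := by
  have hXX := posSemidef_self_mul_conjTranspose X
  rw [traceNorm, CFC.sqrt_eq_cfc, cfc_nnreal_eq_real _ _ hXX.nonneg, hXX.isHermitian.cfc_eq,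
    IsHermitian.cfc, Unitary.conjStarAlgAut_apply]
  rw [show (fun x : ℝ => (NNReal.sqrt x.toNNReal : ℝ)) = Real.sqrt from
    funext fun x => by rw [Real.sqrt]]
  rfl

theorem Matrix.IsHermitian.traceNorm_eq_re_trace_abs {X : Matrix n n ℂ} (hX : X.IsHermitian) :
    traceNorm X = (CFC.abs X).trace.re := by
  rw [traceNorm_eq_re_trace_sqrt, CFC.abs, star_eq_conjTranspose, hX.eq]

theorem re_trace_mul_le_traceNorm {F X : Matrix n n ℂ} (hX : X.IsHermitian)
    (hF₁ : (1 - F).PosSemidef) (hF₂ : (1 + F).PosSemidef) :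
    (F * X).trace.re ≤ traceNorm X := by
  rw [hX.traceNorm_eq_re_trace_abs]
  exact Complex.re_le_re (trace_mul_le_trace_abs hX hF₁ hF₂)

end TraceNorm

theorem swapOp_mul_self (d : ℕ) : swapOp d * swapOp d = 1 := by
  ext p q
  simp only [swapOp, mul_apply, Fintype.sum_prod_type, ite_and, ite_mul, one_mul,
    zero_mul, Finset.sum_ite_eq, Finset.mem_univ, if_true, one_apply, Prod.ext_iff]
  by_cases h1 : p.1 = q.1 <;> by_cases h2 : p.2 = q.2 <;> simp [h1, h2]

theorem isHermitian_swapOp (d : ℕ) : (swapOp d).IsHermitian := by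
  ext p q
  simp [swapOp, conjTranspose_apply, and_comm, eq_comm]

theorem Matrix.IsHermitian.ptranspose2 {d : ℕ} {ρ : Matrix (Fin d × Fin d) (Fin d × Fin d) ℂ}
    (hρ : ρ.IsHermitian) : (ptranspose2 ρ).IsHermitian := by
  ext p q
  exact congrFun (congrFun hρ (p.1, q.2)) (q.1, p.2)

theorem trace_realign_eq_trace_swapOp_mul_ptranspose2 {d : ℕ}
    (ρ : Matrix (Fin d × Fin d) (Fin d × Fin d) ℂ) :
    (realign ρ).trace = (swapOp d * ptranspose2 ρ).trace := by
  simp only [trace, diag, mul_apply, swapOp, ptranspose2, realign, Fintype.sum_prod_type,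
    ite_and, ite_mul, one_mul, zero_mul, Finset.sum_ite_eq, Finset.mem_univ, if_true]
  rw [Finset.sum_comm]

/-- The weak realignment criterion is weaker than the PPT criterion:
`‖ρ^{T₂}‖_tr ≥ Tr R(ρ)`; in particular `‖ρ^{T₂}‖_tr = 1` implies `Tr R(ρ) ≤ 1`. -/
theorem weak_realignment_weaker_than_ppt {d : ℕ}
    (ρ : Matrix (Fin d × Fin d) (Fin d × Fin d) ℂ)
    (hρ : IsDensityMatrix ρ) :
    ((realign ρ).trace).re ≤ traceNorm (ptranspose2 ρ) ∧
    (traceNorm (ptranspose2 ρ) = 1 → ((realign ρ).trace).re ≤ 1) := by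
  have hF := isHermitian_swapOp d
  have hF2 := swapOp_mul_self d
  have hbound : ((realign ρ).trace).re ≤ traceNorm (ptranspose2 ρ) := by
    rw [trace_realign_eq_trace_swapOp_mul_ptranspose2]
    exact re_trace_mul_le_traceNorm hρ.1.isHermitian.ptranspose2
      (hF.posSemidef_one_sub_of_mul_self_eq_one hF2) (hF.posSemidef_one_add_of_mul_self_eq_one hF2)
  exact ⟨hbound, fun hnorm => hnorm ▸ hbound⟩
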